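/- For a functor D from the opposite of the category of finite sets to the category of finite sets, the following are equivalent: (1) D is isomorphic to a finite coproduct of representable presheaves Fin(–, dᵢ) (i.e. D is a Dirichlet functor); (2) D preserves wide pullbacks, i.e. D sends wide pushout colimit cocones in FintypeCat to limit cones in FintypeCat. -/

import Mathlib

/- STATEMENT 1: For a functor `D : FintypeCatᵒᵖ ⥤ FintypeCat`, the following are equivalent:
(1) `D` is isomorphic to a finite coproduct of representable presheaves `Fin(–, dᵢ)`
    (i.e. `D` is a Dirichlet functor);
(2) `D` preserves wide pullbacks, i.e. `D` sends wide pushout colimit cocones in `FintypeCat`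
    to limit cones in `FintypeCat`. -/

open CategoryTheory CategoryTheory.Limits Opposite

noncomputable section

noncomputable instance (X Y : FintypeCat.{0}) : Fintype (X ⟶ Y) := by
  classical exact Fintype.ofFinite _

/-- The finite coproduct `∐ᵢ Fin(–, dᵢ)` of representable presheaves `FintypeCatᵒᵖ ⥤ FintypeCat`. -/
def dirichletSum {I : Type} [Fintype I] (d : I → FintypeCat.{0}) :
    FintypeCat.{0}ᵒᵖ ⥤ FintypeCat.{0} where
  obj X := FintypeCat.of (Σ i, (X.unop ⟶ d i))
  map f := FintypeCat.homMk fun x => ⟨x.1, f.unop ≫ x.2⟩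

/-- A Dirichlet functor is a finite coproduct of representable presheaves. -/
def IsDirichlet (D : FintypeCat.{0}ᵒᵖ ⥤ FintypeCat.{0}) : Prop :=
  ∃ (I : Type) (_ : Fintype I) (d : I → FintypeCat.{0}), Nonempty (D ≅ dirichletSum d)

/-!
A sum of representables `Σᵢ Hom(–, dᵢ)` turns connected colimits into limits: by connectedness a
compatible family of elements has a constant index `i`, and is then just a cocone with apex `dᵢ`.
Conversely, every finite set `X` is the wide pushout of `|X|` copies of the point over `∅`, so if
`D` preserves wide pullbacks then an element of `D(X)` is the same as an `i ∈ D(∅)` together with a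
map from `X` to the fibre of `D(1) → D(∅)` over `i`; that is, `D ≅ Σ_{i ∈ D(∅)} Hom(–, fibreᵢ)`.
-/

section ConnectedColimit

variable {C : Type*} [Category C] {I : Type*} (d : I → C)
  {J : Type*} [Category J] [IsConnected J] {F : J ⥤ C} {c : Cocone F}

theorem CategoryTheory.Limits.IsColimit.existsUnique_sigma_hom (hc : IsColimit c)
    (v : ∀ j, Σ i, (F.obj j ⟶ d i))
    (hv : ∀ ⦃j j' : J⦄ (f : j ⟶ j'),
      (⟨(v j').1, F.map f ≫ (v j').2⟩ : Σ i, (F.obj j ⟶ d i)) = v j) :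
    ∃! y : Σ i, (c.pt ⟶ d i), ∀ j, (⟨y.1, c.ι.app j ≫ y.2⟩ : Σ i, (F.obj j ⟶ d i)) = v j := by
  obtain ⟨i, hi⟩ := constant_of_preserves_morphisms' (fun j => (v j).1)
    fun _ _ f => (congrArg Sigma.fst (hv f)).symm
  have hu : ∀ j, ∃ u : F.obj j ⟶ d i, v j = ⟨i, u⟩ := fun j => by
    rw [← hi j]
    exact ⟨(v j).2, rfl⟩
  choose u hu using hu
  obtain rfl : v = fun j => ⟨i, u j⟩ := funext hu
  let s : Cocone F :=
    { pt := d i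
      ι := { app := u
             naturality := fun j j' f => by simpa using sigma_mk_injective (hv f) } }
  refine ⟨⟨i, hc.desc s⟩, fun j => congrArg _ (hc.fac s j), ?_⟩
  rintro ⟨i', g⟩ hg
  obtain rfl : i' = i := congrArg Sigma.fst (hg (Classical.arbitrary J))
  exact congrArg _ (hc.uniq s g fun j => eq_of_heq (Sigma.mk.inj (hg j)).2)

end ConnectedColimit

theorem nonempty_isLimit_dirichletSum_mapCone {I : Type} [Fintype I] (d : I → FintypeCat.{0})
    {J : Type} [SmallCategory J] [IsConnected J] {F : J ⥤ FintypeCat.{0}} {c : Cocone F}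
    (hc : IsColimit c) : Nonempty (IsLimit ((dirichletSum d).mapCone c.op)) :=
  ⟨isLimitOfReflects FintypeCat.incl <| Nonempty.some <| (Types.isLimit_iff _).mpr fun s hs =>
    (existsUnique_congr fun _ => op_surjective.forall).mpr <|
      hc.existsUnique_sigma_hom d (fun j => s (op j)) fun _ _ f => hs f.op⟩

namespace FintypeCat

def isInitialPEmpty : IsInitial (of PEmpty.{1}) :=
  IsInitial.ofUniqueHom (fun _ => homMk PEmpty.elim) fun _ _ => hom_ext _ _ fun a => a.elim

def pointHom {X : FintypeCat.{0}} (x : X) : of PUnit ⟶ X := homMk fun _ => x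

abbrev pointsWideSpan (X : FintypeCat.{0}) : WidePushoutShape X ⥤ FintypeCat.{0} :=
  WidePushoutShape.wideSpan (of PEmpty) (fun _ => of PUnit) fun _ => isInitialPEmpty.to _

def pointsCocone (X : FintypeCat.{0}) : Cocone (pointsWideSpan X) :=
  WidePushoutShape.mkCocone (isInitialPEmpty.to X) pointHom fun _ => isInitialPEmpty.hom_ext _ _

def isColimitPointsCocone (X : FintypeCat.{0}) : IsColimit (pointsCocone X) where
  desc s := homMk fun x => s.ι.app (some x) PUnit.unit
  fac s := by
    rintro (_ | x)
    · exact isInitialPEmpty.hom_ext _ _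
    · rfl
  uniq s m hm := by
    ext x
    exact ConcreteCategory.congr_hom (hm (some x)) PUnit.unit

end FintypeCat

open FintypeCat

section DirichletFiber

variable (D : FintypeCat.{0}ᵒᵖ ⥤ FintypeCat.{0})

attribute [local instance] FintypeCat.fintype

def dirichletFiber (i : D.obj (op (of PEmpty))) : FintypeCat.{0} :=
  of {a : D.obj (op (of PUnit)) // D.map (isInitialPEmpty.to _).op a = i}

variable {D} in
theorem dirichletFiber_sigma_ext {X : FintypeCat.{0}} {z z' : Σ i, (X ⟶ dirichletFiber D i)}
    (h₁ : z.1 = z'.1) (h₂ : ∀ x, (z.2 x).1 = (z'.2 x).1) : z = z' := by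
  obtain ⟨i, u⟩ := z
  obtain ⟨i', u'⟩ := z'
  obtain rfl : i = i' := h₁
  exact congrArg _ (hom_ext _ _ fun x => Subtype.ext (h₂ x))

theorem map_isInitialPEmpty_to_op_apply {X Y : FintypeCat.{0}} (f : X ⟶ Y) (y : D.obj (op Y)) :
    D.map (isInitialPEmpty.to X).op (D.map f.op y) = D.map (isInitialPEmpty.to Y).op y := by
  rw [← ConcreteCategory.comp_apply, ← D.map_comp, ← op_comp, isInitialPEmpty.hom_ext (_ ≫ f)]

def toDirichletSum : D ⟶ dirichletSum (dirichletFiber D) where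
  app X := homMk fun y => ⟨D.map (isInitialPEmpty.to X.unop).op y,
    homMk fun x => ⟨D.map (pointHom x).op y, map_isInitialPEmpty_to_op_apply D _ y⟩⟩
  naturality X Y f := by
    ext y
    refine dirichletFiber_sigma_ext ?_ fun x => ?_
    · exact map_isInitialPEmpty_to_op_apply D f.unop y
    · show D.map (pointHom x).op (D.map f y) = D.map (pointHom (f.unop x)).op y
      rw [← ConcreteCategory.comp_apply, ← D.map_comp]
      rfl

theorem toDirichletSum_app_bijective (X : FintypeCat.{0})
    (hX : IsLimit (D.mapCone (pointsCocone X).op)) :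
    Function.Bijective ((toDirichletSum D).app (op X)) := by
  have hsections := (Types.isLimit_iff _).mp ⟨isLimitOfPreserves FintypeCat.incl hX⟩
  refine ⟨fun y y' h => ?_, fun ⟨i, g⟩ => ?_⟩
  · refine (hsections _ (Types.sectionOfCone
      (FintypeCat.incl.mapCone (D.mapCone (pointsCocone X).op)) y).2).unique (fun _ => rfl) ?_
    rintro ⟨_ | x⟩
    · exact (congrArg Sigma.fst h).symm
    · exact (congrArg (fun z => (z.2 x).1) h).symm
  · let s : ∀ j, ((pointsWideSpan X).op ⋙ D ⋙ FintypeCat.incl).obj j := fun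
      | ⟨none⟩ => i
      | ⟨some x⟩ => (g x).1
    have hs : s ∈ Functor.sections _ := by
      rintro ⟨_⟩ ⟨_⟩ ⟨_ | x⟩
      · exact ConcreteCategory.congr_hom (CategoryTheory.Functor.map_id _ _) _
      · exact (g x).2
    obtain ⟨y, hy, -⟩ := hsections s hs
    exact ⟨y, dirichletFiber_sigma_ext (hy ⟨none⟩) fun x => hy ⟨some x⟩⟩

end DirichletFiber

theorem dirichlet_iff_preserves_widePullbacks (D : FintypeCat.{0}ᵒᵖ ⥤ FintypeCat.{0}) :
    IsDirichlet D ↔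
      ∀ (J : Type) [Finite J] (F : WidePushoutShape J ⥤ FintypeCat.{0}) (c : Cocone F),
        IsColimit c → Nonempty (IsLimit (D.mapCone c.op)) := by
  refine ⟨fun ⟨I, _, d, ⟨e⟩⟩ J _ F c hc => ?_, fun h => ?_⟩
  · obtain ⟨hd⟩ := nonempty_isLimit_dirichletSum_mapCone d hc
    exact ⟨IsLimit.mapConeEquiv e.symm hd⟩
  · have (X : FintypeCat.{0}ᵒᵖ) : IsIso ((toDirichletSum D).app X) :=
      (ConcreteCategory.isIso_iff_bijective _).mpr <| toDirichletSum_app_bijective D X.unop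
        (h _ _ _ (isColimitPointsCocone X.unop)).some
    have := NatIso.isIso_of_isIso_app (toDirichletSum D)
    exact ⟨_, FintypeCat.fintype, dirichletFiber D, ⟨asIso (toDirichletSum D)⟩⟩
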